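/- Let (X,d,μ) be a metric measure space where μ is a doubling Borel measure with constant D (μ(2B) ≤ D·μ(B) < ∞ for all balls B), let D be a dyadic system with parameter δ ∈ (0,1), and let Q ∈ D be a cube with Haar function h_Q = Σ_k v_k·1_{Q_k}, where Q_k are the children of Q. Then there exist constants 0 < c ≤ C < ∞ depending only on D and δ such that: (a) c·μ(Q)^(−1/2) ≤ ‖h_Q‖_∞ = max_k |v_k| ≤ C·μ(Q)^(−1/2); (b) c·μ(Q)^(1/2) ≤ ‖h_Q‖_{L¹(μ)} ≤ C·μ(Q)^(1/2); (c) |h_Q(x)| ≤ C·μ(Q)^(−1/2)·1_Q(x) for every x ∈ X, and there exists a child Q_j of Q such that |h_Q(x)| ≥ c·μ(Q_j)^(−1/2) for every x ∈ Q_j. -/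

import Mathlib

/-!
Every child `Q'` of a cube `Q` of level `k` contains `B(w, δ^(k+1)/5)` while `Q ⊆ B(w, 6 δ^k)`,
so doubling gives `μ(Q) ≤ A μ(Q')` with `A` depending only on the doubling constant and `δ`.
Since `h` is constant on `Q'`, `h² μ(Q') ≤ ∫ h² = 1`, whence `|h| ≤ √A μ(Q)^(-1/2)`. The lower
bounds come from `1 = ‖h‖₂² ≤ ‖h‖_∞² μ(Q)`, from Hölder's `1 ≤ ‖h‖_∞ ‖h‖₁`, and from a point
where `h²` is at least its mean `1/μ(Q)` over `Q`, together with the child containing it.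
-/

open Metric MeasureTheory

/-- A dyadic system with parameter `δ ∈ (0,1)`: a countable collection of cubes `cube k z`
with centre points `idx k` forming maximal `δ^k`-separated sets, satisfying the standard
properties of dyadic cubes. -/
structure DyadicSystem (X : Type*) [MetricSpace X] (δ : ℝ) where
  idx : ℤ → Set X
  cube : ℤ → X → Set X
  countable : ∀ k, (idx k).Countable
  separated : ∀ k : ℤ, ∀ z ∈ idx k, ∀ w ∈ idx k, z ≠ w → δ ^ k ≤ dist z w
  maximal : ∀ (k : ℤ) (x : X), ∃ z ∈ idx k, dist x z < δ ^ k
  covers : ∀ k : ℤ, (⋃ z ∈ idx k, cube k z) = Set.univ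
  tree : ∀ (k l : ℤ) (z w : X), z ∈ idx k → w ∈ idx l →
    cube k z ∩ cube l w = ∅ ∨ cube k z ⊆ cube l w ∨ cube l w ⊆ cube k z
  ball_subset : ∀ k : ℤ, ∀ z ∈ idx k, ball z (δ ^ k / 5) ⊆ cube k z
  subset_ball : ∀ k : ℤ, ∀ z ∈ idx k, cube k z ⊆ ball z (3 * δ ^ k)
  union_descendants : ∀ (k : ℤ) (m : ℕ), ∀ z ∈ idx k,
    cube k z = ⋃ w ∈ {w ∈ idx (k + (m : ℤ)) | cube (k + (m : ℤ)) w ⊆ cube k z},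
      cube (k + (m : ℤ)) w

/-- A Borel measure `μ` is doubling with constant `Dc` if `μ(2B) ≤ Dc·μ(B) < ∞`
for every open ball `B`. -/
def DoublingMeasure {X : Type*} [MetricSpace X] [MeasurableSpace X] (μ : Measure X)
    (Dc : ℝ) : Prop :=
  ∀ (x : X) (r : ℝ), 0 < r →
    μ (ball x (2 * r)) ≤ ENNReal.ofReal Dc * μ (ball x r) ∧ μ (ball x (2 * r)) < ⊤

/-- A Haar function associated to the cube of level `k` centred at `z` in a dyadic system `D`:
a measurable function supported on the cube, constant on each child of the cube, with zero mean
and `L²(μ)`-norm one. -/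
def IsHaar {X : Type*} [MetricSpace X] [MeasurableSpace X] {δ : ℝ} (μ : Measure X)
    (D : DyadicSystem X δ) (k : ℤ) (z : X) (h : X → ℝ) : Prop :=
  Measurable h ∧
  Function.support h ⊆ D.cube k z ∧
  (∀ w ∈ D.idx (k + 1), D.cube (k + 1) w ⊆ D.cube k z →
    ∀ x ∈ D.cube (k + 1) w, ∀ y ∈ D.cube (k + 1) w, h x = h y) ∧
  (∫ x, h x ∂μ) = 0 ∧
  (∫ x, (h x) ^ 2 ∂μ) = 1

namespace DoublingMeasure

variable {X : Type*} [MetricSpace X] [MeasurableSpace X] {μ : Measure X} {Dc : ℝ}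

theorem measure_ball_two_pow_mul_le (hd : DoublingMeasure μ Dc) (x : X) {r : ℝ} (hr : 0 < r)
    (m : ℕ) : μ (ball x (2 ^ m * r)) ≤ ENNReal.ofReal (max Dc 1 ^ m) * μ (ball x r) := by
  induction m with
  | zero => simp
  | succ m ih =>
    calc μ (ball x (2 ^ (m + 1) * r)) = μ (ball x (2 * (2 ^ m * r))) := by ring_nf
      _ ≤ ENNReal.ofReal (max Dc 1) * (ENNReal.ofReal (max Dc 1 ^ m) * μ (ball x r)) :=
        (hd x _ (by positivity)).1.trans
          (mul_le_mul' (ENNReal.ofReal_le_ofReal (le_max_left _ _)) ih)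
      _ = ENNReal.ofReal (max Dc 1 ^ (m + 1)) * μ (ball x r) := by
        rw [← mul_assoc, ← ENNReal.ofReal_mul (zero_le_one.trans (le_max_right _ _)), pow_succ']

theorem measure_ball_lt_top (hd : DoublingMeasure μ Dc) (x : X) {r : ℝ} (hr : 0 < r) :
    μ (ball x r) < ⊤ := by
  simpa [mul_div_cancel₀] using (hd x (r / 2) (by positivity)).2

end DoublingMeasure

namespace DyadicSystem

variable {X : Type*} [MetricSpace X] {δ : ℝ} (D : DyadicSystem X δ) {k : ℤ} {z w : X}

theorem center_mem_cube (hδ : 0 < δ) (hz : z ∈ D.idx k) : z ∈ D.cube k z :=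
  D.ball_subset k z hz (mem_ball_self (by positivity))

theorem exists_child_mem (hz : z ∈ D.idx k) {x : X} (hx : x ∈ D.cube k z) :
    ∃ w ∈ D.idx (k + 1), D.cube (k + 1) w ⊆ D.cube k z ∧ x ∈ D.cube (k + 1) w := by
  rw [D.union_descendants k 1 z hz] at hx
  simpa [and_assoc] using hx

theorem cube_subset_ball_child (hδ : 0 < δ) {n : ℕ} (hn : 30 ≤ 2 ^ n * δ) (hz : z ∈ D.idx k)
    (hw : w ∈ D.idx (k + 1)) (hwz : D.cube (k + 1) w ⊆ D.cube k z) :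
    D.cube k z ⊆ ball w (2 ^ n * (δ ^ (k + 1) / 5)) := by
  intro x hx
  have hxz : dist x z < 3 * δ ^ k := D.subset_ball k z hz hx
  have hwz' : dist w z < 3 * δ ^ k := D.subset_ball k z hz (hwz (D.center_mem_cube hδ hw))
  have hδk : 0 < δ ^ k := zpow_pos hδ k
  calc dist x w ≤ dist x z + dist w z := dist_triangle_right x w z
    _ < 30 * δ ^ k / 5 := by linarith
    _ ≤ 2 ^ n * δ * δ ^ k / 5 := by gcongr
    _ = 2 ^ n * (δ ^ (k + 1) / 5) := by rw [zpow_add_one₀ hδ.ne']; ring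

variable [MeasurableSpace X] {μ : Measure X} {Dc : ℝ}

theorem measure_cube_lt_top (hd : DoublingMeasure μ Dc) (hδ : 0 < δ) (hz : z ∈ D.idx k) :
    μ (D.cube k z) < ⊤ :=
  (measure_mono (D.subset_ball k z hz)).trans_lt (hd.measure_ball_lt_top z (by positivity))

theorem measureReal_cube_le_mul_measureReal_child (hd : DoublingMeasure μ Dc) (hδ : 0 < δ)
    {n : ℕ} (hn : 30 ≤ 2 ^ n * δ) (hz : z ∈ D.idx k) (hw : w ∈ D.idx (k + 1))
    (hwz : D.cube (k + 1) w ⊆ D.cube k z) :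
    μ.real (D.cube k z) ≤ max Dc 1 ^ n * μ.real (D.cube (k + 1) w) := by
  have hle : μ (D.cube k z) ≤ ENNReal.ofReal (max Dc 1 ^ n) * μ (D.cube (k + 1) w) :=
    calc μ (D.cube k z) ≤ μ (ball w (2 ^ n * (δ ^ (k + 1) / 5))) :=
          measure_mono (D.cube_subset_ball_child hδ hn hz hw hwz)
      _ ≤ ENNReal.ofReal (max Dc 1 ^ n) * μ (ball w (δ ^ (k + 1) / 5)) :=
          hd.measure_ball_two_pow_mul_le w (by positivity) n
      _ ≤ ENNReal.ofReal (max Dc 1 ^ n) * μ (D.cube (k + 1) w) := by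
          gcongr; exact D.ball_subset _ w hw
  have hfin : μ (D.cube (k + 1) w) ≠ ⊤ := (D.measure_cube_lt_top hd hδ hw).ne
  have := ENNReal.toReal_mono (ENNReal.mul_ne_top ENNReal.ofReal_ne_top hfin) hle
  rwa [ENNReal.toReal_mul, ENNReal.toReal_ofReal (by positivity)] at this

end DyadicSystem

theorem Real.rpow_neg_inv_two {t : ℝ} (ht : 0 ≤ t) : t ^ (-(2 : ℝ)⁻¹) = (√t)⁻¹ := by
  rw [Real.rpow_neg ht, Real.sqrt_eq_rpow, one_div]

theorem abs_le_mul_indicator_of_support_subset {α : Type*} {s : Set α} {f : α → ℝ}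
    (hsf : f.support ⊆ s) {B : ℝ} {x : α} (hB : |f x| ≤ B) :
    |f x| ≤ B * s.indicator (fun _ => (1 : ℝ)) x := by
  by_cases hx : x ∈ s
  · rwa [Set.indicator_of_mem hx, mul_one]
  · simp [hx, Function.notMem_support.1 fun hx' => hx (hsf hx')]

theorem pos_of_measureReal_le_mul {α : Type*} [MeasurableSpace α] {μ : Measure α}
    {s t : Set α} {A : ℝ} (hs : 0 < μ.real s) (hst : μ.real s ≤ A * μ.real t) :
    0 < A ∧ 0 < μ.real t := by
  rcases pos_and_pos_or_neg_and_neg_of_mul_pos (hs.trans_le hst) with hpos | ⟨-, hneg⟩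
  · exact hpos
  · exact absurd hneg measureReal_nonneg.not_gt

section LpNormsOnSet

variable {α E : Type*} [MeasurableSpace α] [NormedAddCommGroup E] {μ : Measure α}
  {s : Set α} {f : α → E}

theorem eLpNorm_le_eLpNorm_top_mul_measure_rpow_of_support_subset (hsf : f.support ⊆ s)
    (hf : AEStronglyMeasurable f μ) (p : ENNReal) :
    eLpNorm f p μ ≤ eLpNorm f ⊤ μ * μ s ^ (1 / p.toReal) := by
  rw [← eLpNorm_restrict_eq_of_support_subset hsf,
    ← eLpNorm_restrict_eq_of_support_subset (p := ⊤) hsf]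
  simpa using eLpNorm_le_eLpNorm_mul_rpow_measure_univ le_top hf.restrict

theorem one_le_eLpNorm_top_mul_eLpNorm_one (hf : AEStronglyMeasurable f μ)
    (hf2 : eLpNorm f 2 μ = 1) : 1 ≤ eLpNorm f ⊤ μ * eLpNorm f 1 μ := by
  have hsq : eLpNorm (fun x => ‖f x‖ ^ (2 : ℝ)) 1 μ = 1 := by
    rw [eLpNorm_norm_rpow f two_pos]; simp [hf2]
  have hHolder := eLpNorm_le_eLpNorm_top_mul_eLpNorm 1 f hf (fun a b : E => ‖a‖ * ‖b‖) 1
    (Filter.Eventually.of_forall fun x => by simp)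
  simp only [Real.rpow_two, sq] at hsq
  simpa [hsq] using hHolder

theorem measure_rpow_neg_inv_two_le_eLpNorm_top (hsf : f.support ⊆ s)
    (hf : AEStronglyMeasurable f μ) (hf2 : eLpNorm f 2 μ = 1) :
    μ s ^ (-(2 : ℝ)⁻¹) ≤ eLpNorm f ⊤ μ := by
  have h1 : 1 ≤ μ s ^ (2 : ℝ)⁻¹ * eLpNorm f ⊤ μ := by
    simpa [hf2, mul_comm] using
      eLpNorm_le_eLpNorm_top_mul_measure_rpow_of_support_subset hsf hf 2
  rwa [ENNReal.rpow_neg, ENNReal.inv_le_iff_le_mul (fun _ h0 => by simp [h0] at h1)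
    (fun _ h0 => by simp [h0] at h1)]

variable {C : ℝ}

theorem eLpNorm_one_le_of_eLpNorm_top_le (hsf : f.support ⊆ s) (hf : AEStronglyMeasurable f μ)
    (hs₀ : μ s ≠ 0) (hs : μ s ≠ ⊤)
    (htop : eLpNorm f ⊤ μ ≤ ENNReal.ofReal C * μ s ^ (-(2 : ℝ)⁻¹)) :
    eLpNorm f 1 μ ≤ ENNReal.ofReal C * μ s ^ (2 : ℝ)⁻¹ :=
  calc eLpNorm f 1 μ ≤ eLpNorm f ⊤ μ * μ s ^ (1 : ℝ) := by
        simpa using eLpNorm_le_eLpNorm_top_mul_measure_rpow_of_support_subset hsf hf 1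
    _ ≤ ENNReal.ofReal C * μ s ^ (-(2 : ℝ)⁻¹) * μ s ^ (1 : ℝ) := by gcongr
    _ = ENNReal.ofReal C * μ s ^ (2 : ℝ)⁻¹ := by
        rw [mul_assoc, ← ENNReal.rpow_add _ _ hs₀ hs]; norm_num

theorem le_eLpNorm_one_of_eLpNorm_top_le (hf : AEStronglyMeasurable f μ)
    (hf2 : eLpNorm f 2 μ = 1) (hC : 0 < C)
    (htop : eLpNorm f ⊤ μ ≤ ENNReal.ofReal C * μ s ^ (-(2 : ℝ)⁻¹)) :
    ENNReal.ofReal C⁻¹ * μ s ^ (2 : ℝ)⁻¹ ≤ eLpNorm f 1 μ := by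
  have h1 : 1 ≤ ENNReal.ofReal C * μ s ^ (-(2 : ℝ)⁻¹) * eLpNorm f 1 μ :=
    (one_le_eLpNorm_top_mul_eLpNorm_one hf hf2).trans (by gcongr)
  have hinv : ENNReal.ofReal C⁻¹ * μ s ^ (2 : ℝ)⁻¹ =
      (ENNReal.ofReal C * μ s ^ (-(2 : ℝ)⁻¹))⁻¹ := by
    rw [ENNReal.mul_inv (Or.inl (ENNReal.ofReal_pos.2 hC).ne') (Or.inl ENNReal.ofReal_ne_top),
      ← ENNReal.ofReal_inv_of_pos hC, ENNReal.rpow_neg, inv_inv]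
  rwa [hinv, ENNReal.inv_le_iff_le_mul (fun _ h0 => by simp [h0] at h1)
    (fun _ h0 => by simp [h0] at h1)]

end LpNormsOnSet

section Haar

variable {X : Type*} [MetricSpace X] [MeasurableSpace X] {δ : ℝ} {μ : Measure X}
  {D : DyadicSystem X δ} {k : ℤ} {z : X} {h : X → ℝ}

namespace IsHaar

theorem integrable_sq (hH : IsHaar μ D k z h) : Integrable (fun x => h x ^ 2) μ := by
  obtain ⟨-, -, -, -, hsq⟩ := hH
  by_contra hint
  simp [integral_undef hint] at hsq

theorem eLpNorm_two (hH : IsHaar μ D k z h) : eLpNorm h 2 μ = 1 := by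
  have hmem : MemLp h 2 μ :=
    (memLp_two_iff_integrable_sq hH.1.aestronglyMeasurable).2 hH.integrable_sq
  obtain ⟨-, -, -, -, hsq⟩ := hH
  rw [hmem.eLpNorm_eq_integral_rpow_norm two_ne_zero ENNReal.ofNat_ne_top]
  simp [hsq]

theorem measure_cube_ne_zero (hH : IsHaar μ D k z h) : μ (D.cube k z) ≠ 0 := by
  intro h0
  have h2 := hH.eLpNorm_two
  rw [← eLpNorm_restrict_eq_of_support_subset hH.2.1, Measure.restrict_eq_zero.2 h0,
    eLpNorm_measure_zero] at h2
  exact zero_ne_one h2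

theorem sq_mul_measureReal_child_le_one (hH : IsHaar μ D k z h) {w : X}
    (hw : w ∈ D.idx (k + 1)) (hwz : D.cube (k + 1) w ⊆ D.cube k z)
    (hmeas : MeasurableSet (D.cube (k + 1) w)) {x : X} (hx : x ∈ D.cube (k + 1) w) :
    h x ^ 2 * μ.real (D.cube (k + 1) w) ≤ 1 := by
  have hint := hH.integrable_sq
  obtain ⟨-, -, hconst, -, hsq⟩ := hH
  calc h x ^ 2 * μ.real (D.cube (k + 1) w) = ∫ y in D.cube (k + 1) w, h y ^ 2 ∂μ := by
        rw [setIntegral_congr_fun hmeas fun y hy => by rw [hconst w hw hwz y hy x hx],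
          setIntegral_const, smul_eq_mul, mul_comm]
    _ ≤ ∫ y, h y ^ 2 ∂μ := setIntegral_le_integral hint (ae_of_all _ fun y => sq_nonneg _)
    _ = 1 := hsq

variable {A : ℝ}

theorem abs_le_sqrt_mul_rpow (hH : IsHaar μ D k z h) (hz : z ∈ D.idx k)
    (hmeas : ∀ w ∈ D.idx (k + 1), MeasurableSet (D.cube (k + 1) w))
    (hQ : μ (D.cube k z) ≠ ⊤) (hA : ∀ w ∈ D.idx (k + 1), D.cube (k + 1) w ⊆ D.cube k z →
      μ.real (D.cube k z) ≤ A * μ.real (D.cube (k + 1) w)) (x : X) :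
    |h x| ≤ √A * μ.real (D.cube k z) ^ (-(2 : ℝ)⁻¹) := by
  by_cases hx : x ∈ D.cube k z
  swap
  · rw [Function.notMem_support.1 fun hx' => hx (hH.2.1 hx'), abs_zero]
    positivity
  set M := μ.real (D.cube k z)
  have hM : 0 < M := ENNReal.toReal_pos hH.measure_cube_ne_zero hQ
  obtain ⟨w, hw, hwz, hxw⟩ := D.exists_child_mem hz hx
  have hchild := hH.sq_mul_measureReal_child_le_one hw hwz (hmeas w hw) hxw
  have hMw := hA w hw hwz
  have hA0 := (pos_of_measureReal_le_mul hM hMw).1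
  have hsq : h x ^ 2 ≤ A / M := by
    rw [le_div_iff₀ hM]
    nlinarith [mul_le_mul_of_nonneg_left hMw (sq_nonneg (h x))]
  calc |h x| = √(h x ^ 2) := (Real.sqrt_sq_eq_abs _).symm
    _ ≤ √(A / M) := Real.sqrt_le_sqrt hsq
    _ = √A * M ^ (-(2 : ℝ)⁻¹) := by
      rw [Real.sqrt_div' _ hM.le, Real.rpow_neg_inv_two hM.le, div_eq_mul_inv]

theorem eLpNorm_top_le (hH : IsHaar μ D k z h) (hz : z ∈ D.idx k)
    (hmeas : ∀ w ∈ D.idx (k + 1), MeasurableSet (D.cube (k + 1) w))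
    (hQ : μ (D.cube k z) ≠ ⊤) (hA : ∀ w ∈ D.idx (k + 1), D.cube (k + 1) w ⊆ D.cube k z →
      μ.real (D.cube k z) ≤ A * μ.real (D.cube (k + 1) w)) :
    eLpNorm h ⊤ μ ≤ ENNReal.ofReal √A * μ (D.cube k z) ^ (-(2 : ℝ)⁻¹) := by
  rw [← ENNReal.ofReal_toReal hQ, ENNReal.ofReal_rpow_of_pos
    (ENNReal.toReal_pos hH.measure_cube_ne_zero hQ), ← ENNReal.ofReal_mul (Real.sqrt_nonneg _),
    eLpNorm_exponent_top]
  exact eLpNormEssSup_le_of_ae_bound (ae_of_all _ (hH.abs_le_sqrt_mul_rpow hz hmeas hQ hA))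

theorem exists_child_le_abs (hH : IsHaar μ D k z h) (hz : z ∈ D.idx k)
    (hQ : μ (D.cube k z) ≠ ⊤) (hA : ∀ w ∈ D.idx (k + 1), D.cube (k + 1) w ⊆ D.cube k z →
      μ.real (D.cube k z) ≤ A * μ.real (D.cube (k + 1) w)) :
    ∃ w ∈ D.idx (k + 1), D.cube (k + 1) w ⊆ D.cube k z ∧ ∀ x ∈ D.cube (k + 1) w,
      (√A)⁻¹ * μ.real (D.cube (k + 1) w) ^ (-(2 : ℝ)⁻¹) ≤ |h x| := by
  set M := μ.real (D.cube k z)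
  have hM : 0 < M := ENNReal.toReal_pos hH.measure_cube_ne_zero hQ
  obtain ⟨x₀, hx₀Q, hx₀⟩ :=
    exists_setAverage_le hH.measure_cube_ne_zero hQ hH.integrable_sq.integrableOn
  obtain ⟨-, hsupp, hconst, -, hsq⟩ := hH
  rw [setAverage_eq, setIntegral_eq_integral_of_forall_compl_eq_zero fun x hx => by
      rw [Function.notMem_support.1 fun hx' => hx (hsupp hx'), sq, zero_mul],
    hsq, smul_eq_mul, mul_one] at hx₀
  obtain ⟨w, hw, hwz, hx₀w⟩ := D.exists_child_mem hz hx₀Q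
  refine ⟨w, hw, hwz, fun x hx => ?_⟩
  have hMw := hA w hw hwz
  obtain ⟨hA0, hw0⟩ := pos_of_measureReal_le_mul hM hMw
  calc (√A)⁻¹ * μ.real (D.cube (k + 1) w) ^ (-(2 : ℝ)⁻¹)
      = (√(A * μ.real (D.cube (k + 1) w)))⁻¹ := by
        rw [Real.rpow_neg_inv_two hw0.le, Real.sqrt_mul hA0.le, mul_inv]
    _ ≤ (√M)⁻¹ := inv_anti₀ (Real.sqrt_pos.2 hM) (Real.sqrt_le_sqrt hMw)
    _ = √M⁻¹ := (Real.sqrt_inv _).symm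
    _ ≤ √(h x₀ ^ 2) := Real.sqrt_le_sqrt hx₀
    _ = |h x| := by rw [Real.sqrt_sq_eq_abs, hconst w hw hwz x hx x₀ hx₀w]

end IsHaar

end Haar

/-- Size estimates for Haar functions: there are constants `0 < c ≤ C < ∞`, depending only on
the doubling constant `Dc` and `δ`, such that every Haar function `h` of a cube `Q` satisfies
(a) `c·μ(Q)^(−1/2) ≤ ‖h‖_∞ ≤ C·μ(Q)^(−1/2)`; (b) `c·μ(Q)^(1/2) ≤ ‖h‖_{L¹(μ)} ≤ C·μ(Q)^(1/2)`;
(c) `|h(x)| ≤ C·μ(Q)^(−1/2)·1_Q(x)` for all `x`, and on some child `Q_j` of `Q` one has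
`|h(x)| ≥ c·μ(Q_j)^(−1/2)`. -/
theorem stmt11 (Dc δ : ℝ) (hδ : δ ∈ Set.Ioo (0 : ℝ) 1) :
    ∃ c C : ℝ, 0 < c ∧ c ≤ C ∧
    ∀ (X : Type) [MetricSpace X] [MeasurableSpace X] [BorelSpace X] (μ : Measure X),
      DoublingMeasure μ Dc →
      ∀ D : DyadicSystem X δ, (∀ (k : ℤ) (z : X), z ∈ D.idx k → MeasurableSet (D.cube k z)) →
      ∀ (k : ℤ) (z : X), z ∈ D.idx k →
      ∀ h : X → ℝ, IsHaar μ D k z h →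
        (ENNReal.ofReal c * μ (D.cube k z) ^ (-(2 : ℝ)⁻¹) ≤ eLpNorm h ⊤ μ ∧
          eLpNorm h ⊤ μ ≤ ENNReal.ofReal C * μ (D.cube k z) ^ (-(2 : ℝ)⁻¹)) ∧
        (ENNReal.ofReal c * μ (D.cube k z) ^ ((2 : ℝ)⁻¹) ≤ eLpNorm h 1 μ ∧
          eLpNorm h 1 μ ≤ ENNReal.ofReal C * μ (D.cube k z) ^ ((2 : ℝ)⁻¹)) ∧
        (∀ x : X, |h x| ≤
          C * (μ (D.cube k z)).toReal ^ (-(2 : ℝ)⁻¹) *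
            Set.indicator (D.cube k z) (fun _ => (1 : ℝ)) x) ∧
        (∃ w ∈ D.idx (k + 1), D.cube (k + 1) w ⊆ D.cube k z ∧
          ∀ x ∈ D.cube (k + 1) w,
            c * (μ (D.cube (k + 1) w)).toReal ^ (-(2 : ℝ)⁻¹) ≤ |h x|) := by
  obtain ⟨n, hn⟩ := pow_unbounded_of_one_lt (30 / δ) (one_lt_two (α := ℝ))
  have hn' : 30 ≤ 2 ^ n * δ := ((div_lt_iff₀ hδ.1).1 hn).le
  set A := max Dc 1 ^ n
  have hC : 1 ≤ √A := Real.one_le_sqrt.2 (one_le_pow₀ (le_max_right _ _))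
  have hc : (√A)⁻¹ ≤ 1 := inv_le_one_of_one_le₀ hC
  refine ⟨(√A)⁻¹, √A, by positivity, hc.trans hC, ?_⟩
  intro X _ _ _ μ hd D hmeas k z hz h hH
  have hQtop : μ (D.cube k z) ≠ ⊤ := (D.measure_cube_lt_top hd hδ.1 hz).ne
  have hA : ∀ w ∈ D.idx (k + 1), D.cube (k + 1) w ⊆ D.cube k z →
      μ.real (D.cube k z) ≤ A * μ.real (D.cube (k + 1) w) := fun w hw hwz =>
    D.measureReal_cube_le_mul_measureReal_child hd hδ.1 hn' hz hw hwz
  have hmeas' : ∀ w ∈ D.idx (k + 1), MeasurableSet (D.cube (k + 1) w) := hmeas _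
  have htop := hH.eLpNorm_top_le hz hmeas' hQtop hA
  have hh : AEStronglyMeasurable h μ := hH.1.aestronglyMeasurable
  have hsupp : h.support ⊆ D.cube k z := hH.2.1
  refine ⟨⟨?_, htop⟩, ⟨?_, ?_⟩, fun x => ?_, hH.exists_child_le_abs hz hQtop hA⟩
  · exact (mul_le_of_le_one_left' (ENNReal.ofReal_le_one.2 hc)).trans
      (measure_rpow_neg_inv_two_le_eLpNorm_top hsupp hh hH.eLpNorm_two)
  · exact le_eLpNorm_one_of_eLpNorm_top_le hh hH.eLpNorm_two (by positivity) htop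
  · exact eLpNorm_one_le_of_eLpNorm_top_le hsupp hh hH.measure_cube_ne_zero hQtop htop
  · exact abs_le_mul_indicator_of_support_subset hsupp
      (hH.abs_le_sqrt_mul_rpow hz hmeas' hQtop hA x)
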